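/- Let E be a q-uniformly smooth (1 < q ≤ 2) and 2-uniformly convex real Banach space, C ⊆ E a nonempty closed convex subset, and T: C → E a firmly nonexpansive type mapping. Then for every R > 0 there exists a constant L > 0 such that for all x, y ∈ C with ‖x‖ ≤ R and ‖y‖ ≤ R, ‖Tx − Ty‖ ≤ L‖x − y‖^{q−1}. -/

import Mathlib

open Set

/-- Modulus of smoothness of a normed space `E`. -/
noncomputable def smoothnessModulus (E : Type*) [NormedAddCommGroup E] [NormedSpace ℝ E]
    (τ : ℝ) : ℝ :=
  sSup {t : ℝ | ∃ x y : E, ‖x‖ ≤ 1 ∧ ‖y‖ ≤ 1 ∧ t = (‖x + τ • y‖ + ‖x - τ • y‖) / 2 - 1}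

/-- Modulus of convexity of a normed space `E`. -/
noncomputable def convexityModulus (E : Type*) [NormedAddCommGroup E] [NormedSpace ℝ E]
    (ε : ℝ) : ℝ :=
  sInf {t : ℝ | ∃ x y : E, ‖x‖ ≤ 1 ∧ ‖y‖ ≤ 1 ∧ ‖x - y‖ = ε ∧ t = 1 - ‖x + y‖ / 2}

/-!
Two-uniform convexity makes the duality map strongly monotone,
`γ ‖u - v‖² ≤ (J u - J v) (u - v)` with `γ = min (1/2) (2c)`, and `q`-uniform smoothness makes it
`(q - 1)`-Hölder on bounded sets: the bound `‖x + τ z‖ + ‖x - τ z‖ ≤ 2 + 2Kτ^q` forces norming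
functionals of nearby unit vectors to be close in every direction `z`, and the general case follows
by scaling. For `T` of firmly nonexpansive type and `w = T x - T y` this gives
`γ ‖w‖² ≤ (J (T x) - J (T y)) w ≤ (J x - J y) w ≤ ‖J x - J y‖ ‖w‖ ≤ M ‖x - y‖^(q-1) ‖w‖`.
-/

open Filter Topology

lemma le_of_forall_le_mul_rpow_add_div {N a p d : ℝ} (hp : 0 < p) (hd : 0 ≤ d)
    (h : ∀ τ > 0, N ≤ a * τ ^ p + N * d / τ) : N ≤ 2 * a * (2 * d) ^ p := by
  rcases hd.eq_or_lt with rfl | hd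
  · have hlim : Tendsto (fun τ : ℝ => a * τ ^ p) (𝓝[>] 0) (𝓝 0) := by
      have := ((Real.continuousAt_rpow_const 0 p (Or.inr hp.le)).const_mul a).tendsto
      rw [Real.zero_rpow hp.ne', mul_zero] at this
      exact this.mono_left nhdsWithin_le_nhds
    rw [mul_zero, Real.zero_rpow hp.ne', mul_zero]
    exact ge_of_tendsto hlim (eventually_nhdsWithin_of_forall fun τ hτ => by simpa using h τ hτ)
  · have := h (2 * d) (by positivity)
    rw [show N * d / (2 * d) = N / 2 by field_simp] at this
    linarith

lemma mul_rpow_le_rpow_one_sub_mul_mul_rpow {A R s p : ℝ} (hA : 0 ≤ A) (hAR : A ≤ R)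
    (hs : 0 ≤ s) (hp : p ≤ 1) :
    A * s ^ p ≤ R ^ (1 - p) * (A * s) ^ p := by
  rcases hA.eq_or_lt with rfl | hA
  · rw [zero_mul]
    positivity
  · rw [Real.mul_rpow hA.le hs, ← mul_assoc]
    gcongr
    calc A = A ^ (1 - p) * A ^ p := by rw [← Real.rpow_add hA]; simp
      _ ≤ R ^ (1 - p) * A ^ p := by gcongr

section NormedSpace

variable {E : Type*} [NormedAddCommGroup E] [NormedSpace ℝ E]

lemma le_smoothnessModulus (τ : ℝ) {x y : E} (hx : ‖x‖ ≤ 1) (hy : ‖y‖ ≤ 1) :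
    (‖x + τ • y‖ + ‖x - τ • y‖) / 2 - 1 ≤ smoothnessModulus E τ := by
  refine le_csSup ⟨|τ|, ?_⟩ ⟨x, y, hx, hy, rfl⟩
  rintro t ⟨a, b, ha, hb, rfl⟩
  have hτb : ‖τ • b‖ ≤ |τ| := by
    rw [norm_smul, Real.norm_eq_abs]
    exact mul_le_of_le_one_right (abs_nonneg τ) hb
  linarith [norm_add_le a (τ • b), norm_sub_le a (τ • b)]

lemma convexityModulus_le {x y : E} (hx : ‖x‖ ≤ 1) (hy : ‖y‖ ≤ 1) :
    convexityModulus E ‖x - y‖ ≤ 1 - ‖x + y‖ / 2 := by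
  refine csInf_le ⟨0, ?_⟩ ⟨x, y, hx, hy, rfl, rfl⟩
  rintro t ⟨a, b, ha, hb, -, rfl⟩
  linarith [norm_add_le a b]

lemma norm_add_le_of_convexityModulus {c : ℝ}
    (hmod : ∀ ε ∈ Ioc (0 : ℝ) 2, c * ε ^ 2 ≤ convexityModulus E ε)
    {x y : E} (hx : ‖x‖ ≤ 1) (hy : ‖y‖ ≤ 1) :
    ‖x + y‖ ≤ 2 - 2 * c * ‖x - y‖ ^ 2 := by
  rcases eq_or_ne x y with rfl | hxy
  · simpa using (norm_add_le x x).trans (by linarith)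
  · have hε : ‖x - y‖ ∈ Ioc (0 : ℝ) 2 :=
      ⟨norm_pos_iff.2 (sub_ne_zero.2 hxy), (norm_sub_le x y).trans (by linarith)⟩
    linarith [hmod _ hε, convexityModulus_le hx hy]

lemma norm_inv_norm_smul_le_one (x : E) : ‖‖x‖⁻¹ • x‖ ≤ 1 := by
  rw [norm_smul, norm_inv, norm_norm]
  exact inv_mul_le_one_of_le₀ le_rfl (norm_nonneg x)

lemma norm_mul_norm_inv_smul_sub_le {x y : E} (hx : x ≠ 0) (hy : y ≠ 0) :
    ‖x‖ * ‖‖x‖⁻¹ • x - ‖y‖⁻¹ • y‖ ≤ 2 * ‖x - y‖ := by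
  have hx' : ‖x‖ ≠ 0 := norm_ne_zero_iff.2 hx
  have hy' : 0 < ‖y‖ := norm_pos_iff.2 hy
  have e : ‖x‖ • (‖x‖⁻¹ • x - ‖y‖⁻¹ • y) = (x - y) + ((‖y‖ - ‖x‖) / ‖y‖) • y := by
    rw [smul_sub, smul_inv_smul₀ hx', smul_smul, sub_div, div_self hy'.ne', sub_smul, one_smul,
      div_eq_mul_inv]
    abel
  calc ‖x‖ * ‖‖x‖⁻¹ • x - ‖y‖⁻¹ • y‖ = ‖(x - y) + ((‖y‖ - ‖x‖) / ‖y‖) • y‖ := by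
        rw [← e, norm_smul, norm_norm]
    _ ≤ ‖x - y‖ + |‖y‖ - ‖x‖| := by
        refine (norm_add_le _ _).trans_eq ?_
        rw [norm_smul, Real.norm_eq_abs, abs_div, abs_norm, div_mul_cancel₀ _ hy'.ne']
    _ ≤ 2 * ‖x - y‖ := by linarith [abs_norm_sub_norm_le y x, norm_sub_rev y x]

lemma ContinuousLinearMap.apply_le_of_opNorm_le_one {f : E →L[ℝ] ℝ} (hf : ‖f‖ ≤ 1) (x : E) :
    f x ≤ ‖x‖ :=
  (le_abs_self _).trans ((f.le_opNorm x).trans (mul_le_of_le_one_left (norm_nonneg x) hf))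

lemma ContinuousLinearMap.opNorm_le_of_forall_apply_le {f : E →L[ℝ] ℝ} {M : ℝ}
    (h : ∀ z, ‖z‖ ≤ 1 → f z ≤ M) : ‖f‖ ≤ M := by
  have hM : 0 ≤ M := by simpa using h 0 (by simp)
  refine f.opNorm_le_of_unit_norm hM fun z hz => abs_le.2 ⟨?_, h z hz.le⟩
  have := h (-z) (by simp [hz])
  rw [map_neg] at this
  linarith

lemma ContinuousLinearMap.mul_norm_le_opNorm_of_mul_sq_le {f : E →L[ℝ] ℝ} {w : E} {γ : ℝ}
    (h : γ * ‖w‖ ^ 2 ≤ f w) : γ * ‖w‖ ≤ ‖f‖ := by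
  rcases (norm_nonneg w).eq_or_lt with hw | hw
  · rw [← hw, mul_zero]
    exact norm_nonneg f
  · have hf : f w ≤ ‖f‖ * ‖w‖ := (le_abs_self _).trans (f.le_opNorm w)
    exact le_of_mul_le_mul_right (by nlinarith) hw

-- The term `‖f - g‖ * ‖x - y‖` pays for evaluating `g` at `x` instead of at `y`.
lemma apply_sub_apply_le_of_norm_add_add_norm_sub_le {f g : E →L[ℝ] ℝ} {x y z : E} {τ δ : ℝ}
    (hs : ‖x + τ • z‖ + ‖x - τ • z‖ ≤ 2 + δ) (hf : ‖f‖ ≤ 1) (hg : ‖g‖ ≤ 1) (hy : ‖y‖ ≤ 1)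
    (hfx : f x = 1) (hgy : g y = 1) :
    τ * (f z - g z) ≤ δ + ‖f - g‖ * ‖x - y‖ := by
  have h₁ := f.apply_le_of_opNorm_le_one hf (x + τ • z)
  have h₂ := g.apply_le_of_opNorm_le_one hg (x - τ • z)
  have h₃ := f.apply_le_of_opNorm_le_one hf y
  have h₄ : (f - g) (x - y) ≤ ‖f - g‖ * ‖x - y‖ :=
    (le_abs_self _).trans ((f - g).le_opNorm _)
  simp only [map_add, map_sub, map_smul, smul_eq_mul, sub_apply] at h₁ h₂ h₄
  linarith

-- With `x = y` this is the uniqueness of the norming functional of a unit vector.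
theorem norm_sub_le_of_apply_eq_one {K q : ℝ} (hq : 1 < q)
    (hsmooth : ∀ τ > 0, ∀ a b : E, ‖a‖ ≤ 1 → ‖b‖ ≤ 1 →
      ‖a + τ • b‖ + ‖a - τ • b‖ ≤ 2 + 2 * K * τ ^ q)
    {f g : E →L[ℝ] ℝ} {x y : E} (hf : ‖f‖ ≤ 1) (hg : ‖g‖ ≤ 1) (hx : ‖x‖ ≤ 1) (hy : ‖y‖ ≤ 1)
    (hfx : f x = 1) (hgy : g y = 1) :
    ‖f - g‖ ≤ 4 * K * (2 * ‖x - y‖) ^ (q - 1) := by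
  suffices h : ∀ τ > 0, ‖f - g‖ ≤ 2 * K * τ ^ (q - 1) + ‖f - g‖ * ‖x - y‖ / τ by
    linarith [le_of_forall_le_mul_rpow_add_div (by linarith) (norm_nonneg _) h]
  intro τ hτ
  refine ContinuousLinearMap.opNorm_le_of_forall_apply_le fun z hz => ?_
  have := apply_sub_apply_le_of_norm_add_add_norm_sub_le (hsmooth τ hτ x z hx hz) hf hg hy hfx hgy
  rw [sub_apply, Real.rpow_sub_one hτ.ne', mul_div_assoc', ← add_div, le_div_iff₀ hτ]
  linarith

-- Here `u = A • p`, `v = B • r` with `‖p - r‖ = ε`: uniform convexity controls the angular part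
-- `A * ε` of `‖u - v‖`, and the radial part `B - A` is controlled for free.
lemma min_mul_norm_smul_sub_smul_sq_le {f g : E →L[ℝ] ℝ} {p r : E} {A B c : ℝ} (hc : 0 ≤ c)
    (hconv : ‖p + r‖ ≤ 2 - 2 * c * ‖p - r‖ ^ 2) (hf : ‖f‖ ≤ 1) (hg : ‖g‖ ≤ 1) (hr : ‖r‖ ≤ 1)
    (hfp : f p = 1) (hgr : g r = 1) (hA : 0 ≤ A) (hAB : A ≤ B) :
    min (1 / 2) (2 * c) * ‖A • p - B • r‖ ^ 2 ≤ (A • f - B • g) (A • p - B • r) := by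
  set ε := ‖p - r‖
  set γ := min (1 / 2 : ℝ) (2 * c)
  have hγ : 0 ≤ γ := le_min (by norm_num) (by linarith)
  have hS : f r + g p ≤ 2 - 4 * c * ε ^ 2 := by
    have hfg : ‖f + g‖ ≤ 2 := (norm_add_le f g).trans (by linarith)
    have h : (f + g) (p + r) ≤ 2 * ‖p + r‖ := (le_abs_self _).trans
      (((f + g).le_opNorm _).trans (mul_le_mul_of_nonneg_right hfg (norm_nonneg _)))
    simp only [add_apply, map_add, hfp, hgr] at h
    linarith
  have hW : ‖A • p - B • r‖ ≤ A * ε + (B - A) := by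
    have e : A • p - B • r = A • (p - r) + (A - B) • r := by module
    rw [e]
    refine (norm_add_le _ _).trans ?_
    rw [norm_smul, norm_smul, Real.norm_eq_abs, Real.norm_eq_abs, abs_of_nonneg hA,
      abs_of_nonpos (by linarith)]
    nlinarith
  have hexp : (A • f - B • g) (A • p - B • r) = (B - A) ^ 2 + A * B * (2 - (f r + g p)) := by
    simp only [sub_apply, smul_apply, map_sub, map_smul, smul_eq_mul, hfp, hgr]
    ring
  calc γ * ‖A • p - B • r‖ ^ 2 ≤ γ * (2 * (A * ε) ^ 2 + 2 * (B - A) ^ 2) := by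
        gcongr
        nlinarith [sq_nonneg (A * ε - (B - A)), norm_nonneg (A • p - B • r)]
    _ ≤ 2 * c * (2 * (A * ε) ^ 2) + 1 / 2 * (2 * (B - A) ^ 2) := by
        rw [mul_add]
        gcongr
        exacts [min_le_right _ _, min_le_left _ _]
    _ ≤ (B - A) ^ 2 + A * B * (4 * c * ε ^ 2) := by
        nlinarith [mul_le_mul_of_nonneg_left hAB hA, mul_nonneg hc (sq_nonneg ε)]
    _ ≤ (A • f - B • g) (A • p - B • r) := by
        rw [hexp]
        gcongr
        · exact mul_nonneg hA (hA.trans hAB)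
        · linarith

variable {J : E → E →L[ℝ] ℝ}

lemma dualityMap_zero (hJn : ∀ x, ‖J x‖ = ‖x‖) : J 0 = 0 :=
  norm_eq_zero.1 ((hJn 0).trans norm_zero)

lemma norm_inv_norm_smul_dualityMap_le_one (hJn : ∀ x, ‖J x‖ = ‖x‖) (x : E) :
    ‖‖x‖⁻¹ • J x‖ ≤ 1 := by
  rw [norm_smul, norm_inv, norm_norm, hJn]
  exact inv_mul_le_one_of_le₀ le_rfl (norm_nonneg x)

lemma inv_norm_smul_dualityMap_apply (hJ : ∀ x, J x x = ‖x‖ ^ 2) {x : E} (hx : x ≠ 0) :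
    (‖x‖⁻¹ • J x) (‖x‖⁻¹ • x) = 1 := by
  rw [smul_apply, map_smul, hJ, smul_eq_mul, smul_eq_mul]
  field_simp [norm_ne_zero_iff.2 hx]

theorem min_mul_norm_sub_sq_le_dualityMap (hJ : ∀ x, J x x = ‖x‖ ^ 2)
    (hJn : ∀ x, ‖J x‖ = ‖x‖) {c : ℝ} (hc : 0 ≤ c)
    (hconv : ∀ p r : E, ‖p‖ ≤ 1 → ‖r‖ ≤ 1 → ‖p + r‖ ≤ 2 - 2 * c * ‖p - r‖ ^ 2) (u v : E) :
    min (1 / 2) (2 * c) * ‖u - v‖ ^ 2 ≤ (J u - J v) (u - v) := by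
  wlog huv : ‖u‖ ≤ ‖v‖ generalizing u v
  · have hsymm : (J v - J u) (v - u) = (J u - J v) (u - v) := by
      simp only [sub_apply, map_sub]
      ring
    simpa only [norm_sub_rev v u, hsymm] using this v u (le_of_not_ge huv)
  rcases eq_or_ne u 0 with rfl | hu
  · have hγ : min (1 / 2 : ℝ) (2 * c) ≤ 1 := (min_le_left _ _).trans (by norm_num)
    simpa [dualityMap_zero hJn, hJ] using mul_le_of_le_one_left (sq_nonneg ‖v‖) hγ
  have hv : v ≠ 0 := norm_pos_iff.1 ((norm_pos_iff.2 hu).trans_le huv)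
  have key := min_mul_norm_smul_sub_smul_sq_le hc
    (hconv _ _ (norm_inv_norm_smul_le_one u) (norm_inv_norm_smul_le_one v))
    (norm_inv_norm_smul_dualityMap_le_one hJn u) (norm_inv_norm_smul_dualityMap_le_one hJn v)
    (norm_inv_norm_smul_le_one v) (inv_norm_smul_dualityMap_apply hJ hu)
    (inv_norm_smul_dualityMap_apply hJ hv) (norm_nonneg u) huv
  simpa only [smul_inv_smul₀ (norm_ne_zero_iff.2 hu), smul_inv_smul₀ (norm_ne_zero_iff.2 hv)]
    using key

lemma norm_dualityMap_sub_le_of_ne_zero (hJ : ∀ x, J x x = ‖x‖ ^ 2) (hJn : ∀ x, ‖J x‖ = ‖x‖)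
    {K q R : ℝ} (hK : 0 ≤ K) (hq₁ : 1 < q) (hq₂ : q ≤ 2)
    (hsmooth : ∀ τ > 0, ∀ a b : E, ‖a‖ ≤ 1 → ‖b‖ ≤ 1 →
      ‖a + τ • b‖ + ‖a - τ • b‖ ≤ 2 + 2 * K * τ ^ q)
    {x y : E} (hx₀ : x ≠ 0) (hy₀ : y ≠ 0) (hx : ‖x‖ ≤ R) :
    ‖J x - J y‖ ≤ 4 * K * R ^ (2 - q) * (4 * ‖x - y‖) ^ (q - 1) + ‖x - y‖ := by
  set f := ‖x‖⁻¹ • J x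
  set g := ‖y‖⁻¹ • J y
  set w := ‖x‖⁻¹ • x - ‖y‖⁻¹ • y
  have hsplit : J x - J y = ‖x‖ • (f - g) + (‖x‖ - ‖y‖) • g := by
    have hfx : J x = ‖x‖ • f := (smul_inv_smul₀ (norm_ne_zero_iff.2 hx₀) _).symm
    have hgy : J y = ‖y‖ • g := (smul_inv_smul₀ (norm_ne_zero_iff.2 hy₀) _).symm
    rw [hfx, hgy]
    module
  have hfg : ‖f - g‖ ≤ 4 * K * (2 * ‖w‖) ^ (q - 1) :=
    norm_sub_le_of_apply_eq_one hq₁ hsmooth (norm_inv_norm_smul_dualityMap_le_one hJn x)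
      (norm_inv_norm_smul_dualityMap_le_one hJn y) (norm_inv_norm_smul_le_one x)
      (norm_inv_norm_smul_le_one y) (inv_norm_smul_dualityMap_apply hJ hx₀)
      (inv_norm_smul_dualityMap_apply hJ hy₀)
  have hscale : ‖x‖ * (2 * ‖w‖) ^ (q - 1) ≤ R ^ (2 - q) * (4 * ‖x - y‖) ^ (q - 1) := by
    have hw : ‖x‖ * (2 * ‖w‖) ≤ 4 * ‖x - y‖ := by
      linarith [norm_mul_norm_inv_smul_sub_le hx₀ hy₀]
    have hR : 0 ≤ R := (norm_nonneg x).trans hx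
    calc ‖x‖ * (2 * ‖w‖) ^ (q - 1) ≤ R ^ (2 - q) * (‖x‖ * (2 * ‖w‖)) ^ (q - 1) := by
          rw [show 2 - q = 1 - (q - 1) by ring]
          exact mul_rpow_le_rpow_one_sub_mul_mul_rpow (norm_nonneg x) hx (by positivity)
            (by linarith)
      _ ≤ R ^ (2 - q) * (4 * ‖x - y‖) ^ (q - 1) := by gcongr _ * ?_ ^ _
  calc ‖J x - J y‖ ≤ ‖x‖ * ‖f - g‖ + |‖x‖ - ‖y‖| * ‖g‖ := by
        rw [hsplit]
        refine (norm_add_le _ _).trans_eq ?_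
        rw [norm_smul, norm_smul, norm_norm, Real.norm_eq_abs]
    _ ≤ ‖x‖ * (4 * K * (2 * ‖w‖) ^ (q - 1)) + ‖x - y‖ * 1 :=
        add_le_add (mul_le_mul_of_nonneg_left hfg (norm_nonneg x))
          (mul_le_mul (abs_norm_sub_norm_le x y) (norm_inv_norm_smul_dualityMap_le_one hJn y)
            (norm_nonneg _) (norm_nonneg _))
    _ ≤ 4 * K * R ^ (2 - q) * (4 * ‖x - y‖) ^ (q - 1) + ‖x - y‖ := by
        nlinarith [mul_le_mul_of_nonneg_left hscale (by positivity : (0 : ℝ) ≤ 4 * K)]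

theorem norm_dualityMap_sub_le (hJ : ∀ x, J x x = ‖x‖ ^ 2) (hJn : ∀ x, ‖J x‖ = ‖x‖)
    {K q R : ℝ} (hK : 0 ≤ K) (hq₁ : 1 < q) (hq₂ : q ≤ 2)
    (hsmooth : ∀ τ > 0, ∀ a b : E, ‖a‖ ≤ 1 → ‖b‖ ≤ 1 →
      ‖a + τ • b‖ + ‖a - τ • b‖ ≤ 2 + 2 * K * τ ^ q)
    {x y : E} (hx : ‖x‖ ≤ R) (hy : ‖y‖ ≤ R) :
    ‖J x - J y‖ ≤ (4 * K * R ^ (2 - q) * 4 ^ (q - 1) + (2 * R) ^ (2 - q)) * ‖x - y‖ ^ (q - 1) := by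
  have hlin : ‖x - y‖ ≤ (2 * R) ^ (2 - q) * ‖x - y‖ ^ (q - 1) := by
    simpa [show 2 - q = 1 - (q - 1) by ring] using
      mul_rpow_le_rpow_one_sub_mul_mul_rpow (norm_nonneg (x - y))
        ((norm_sub_le x y).trans (by linarith)) zero_le_one (by linarith)
  rw [add_mul, mul_assoc _ (4 ^ (q - 1)), ← Real.mul_rpow (by norm_num) (norm_nonneg _)]
  by_cases h₀ : x = 0 ∨ y = 0
  · have hxy : ‖J x - J y‖ = ‖x - y‖ := by
      rcases h₀ with rfl | rfl <;> simp [dualityMap_zero hJn, hJn]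
    have : 0 ≤ 4 * K * R ^ (2 - q) * (4 * ‖x - y‖) ^ (q - 1) := by
      have hR : 0 ≤ R := (norm_nonneg x).trans hx
      positivity
    linarith
  obtain ⟨hx₀, hy₀⟩ := not_or.1 h₀
  linarith [norm_dualityMap_sub_le_of_ne_zero hJ hJn hK hq₁ hq₂ hsmooth hx₀ hy₀ hx]

end NormedSpace

theorem stmt9_general {E : Type*} [NormedAddCommGroup E] [NormedSpace ℝ E]
    (J : E → (E →L[ℝ] ℝ))
    (hJ : ∀ x : E, J x x = ‖x‖ ^ 2) (hJn : ∀ x : E, ‖J x‖ = ‖x‖)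
    (K q : ℝ) (hK : 0 < K) (hq1 : 1 < q) (hq2 : q ≤ 2)
    -- q-uniform smoothness
    (hρ : ∀ τ > (0:ℝ), smoothnessModulus E τ ≤ K * τ ^ q)
    -- 2-uniform convexity
    (h2uc : ∃ c > (0:ℝ), ∀ ε ∈ Ioc (0:ℝ) 2, c * ε ^ 2 ≤ convexityModulus E ε)
    (C : Set E)
    (T : E → E)
    -- firmly nonexpansive type on C
    (hT : ∀ x ∈ C, ∀ y ∈ C,
      (J (T x) - J (T y)) (T x - T y) ≤ (J x - J y) (T x - T y)) :
    ∀ R > (0:ℝ), ∃ L > (0:ℝ), ∀ x ∈ C, ∀ y ∈ C, ‖x‖ ≤ R → ‖y‖ ≤ R →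
      ‖T x - T y‖ ≤ L * ‖x - y‖ ^ (q - 1) := by
  obtain ⟨c, hc, hmod⟩ := h2uc
  have hsmooth : ∀ τ > 0, ∀ a b : E, ‖a‖ ≤ 1 → ‖b‖ ≤ 1 →
      ‖a + τ • b‖ + ‖a - τ • b‖ ≤ 2 + 2 * K * τ ^ q := fun τ hτ a b ha hb => by
    linarith [le_smoothnessModulus τ ha hb, hρ τ hτ]
  intro R hR
  have hγ : 0 < min (1 / 2 : ℝ) (2 * c) := lt_min (by norm_num) (by linarith)
  refine ⟨(4 * K * R ^ (2 - q) * 4 ^ (q - 1) + (2 * R) ^ (2 - q)) / min (1 / 2) (2 * c),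
    by positivity, fun x hx y hy hxR hyR => ?_⟩
  rw [div_mul_eq_mul_div, le_div_iff₀ hγ, mul_comm]
  calc _ ≤ ‖J x - J y‖ := ContinuousLinearMap.mul_norm_le_opNorm_of_mul_sq_le <|
        (min_mul_norm_sub_sq_le_dualityMap hJ hJn hc.le
          (fun p r hp hr => norm_add_le_of_convexityModulus hmod hp hr) (T x) (T y)).trans
          (hT x hx y hy)
    _ ≤ _ := norm_dualityMap_sub_le hJ hJn hK.le hq1 hq2 hsmooth hxR hyR

theorem stmt9 {E : Type*} [NormedAddCommGroup E] [NormedSpace ℝ E] [CompleteSpace E]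
    (J : E → (E →L[ℝ] ℝ))
    (hJ : ∀ x : E, J x x = ‖x‖ ^ 2) (hJn : ∀ x : E, ‖J x‖ = ‖x‖)
    (K q : ℝ) (hK : 0 < K) (hq1 : 1 < q) (hq2 : q ≤ 2)
    -- q-uniform smoothness
    (hρ : ∀ τ > (0:ℝ), smoothnessModulus E τ ≤ K * τ ^ q)
    -- 2-uniform convexity
    (h2uc : ∃ c > (0:ℝ), ∀ ε ∈ Ioc (0:ℝ) 2, c * ε ^ 2 ≤ convexityModulus E ε)
    (C : Set E) (hCne : C.Nonempty) (hCcl : IsClosed C) (hCcv : Convex ℝ C)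
    (T : E → E)
    -- firmly nonexpansive type on C
    (hT : ∀ x ∈ C, ∀ y ∈ C,
      (J (T x) - J (T y)) (T x - T y) ≤ (J x - J y) (T x - T y)) :
    ∀ R > (0:ℝ), ∃ L > (0:ℝ), ∀ x ∈ C, ∀ y ∈ C, ‖x‖ ≤ R → ‖y‖ ≤ R →
      ‖T x - T y‖ ≤ L * ‖x - y‖ ^ (q - 1) :=
  stmt9_general J hJ hJn K q hK hq1 hq2 hρ h2uc C T hT
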